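/- Let T be a tree on ℕ and x : ℕ → ℕ. Define S = {σ ∈ List ℕ : σ_even ∈ T and σ_odd is an initial segment of x}. Then S is a tree on ℕ; every path g of S satisfies g_odd = x; the map h ↦ h ⊔ x is a bijection from the set of paths of T onto the set of paths of S, with inverse g ↦ g_even; and for all paths g, h of S, g <_l h if and only if g_even <_l h_even. -/

import Mathlib

/-- A tree on ℕ: a set of finite sequences closed under taking initial segments. -/
def IsTree (T : Set (List ℕ)) : Prop :=
  ∀ σ ∈ T, ∀ τ : List ℕ, τ <+: σ → τ ∈ T

/-- `SX X` = the set of sequences having some element of `X` as an initial segment. -/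
def SX (X : Set (List ℕ)) : Set (List ℕ) :=
  {σ | ∃ τ ∈ X, τ <+: σ}

/-- `σ` is an endnode of `A` if `σ ∈ A` and no one-step extension of `σ` is in `A`. -/
def IsEndnode (A : Set (List ℕ)) (σ : List ℕ) : Prop :=
  σ ∈ A ∧ ∀ n : ℕ, σ ++ [n] ∉ A

/-- The operator `Γ_T`. -/
def Gam (T X : Set (List ℕ)) : Set (List ℕ) :=
  SX X ∪ {σ | ∃ τ : List ℕ, τ <+: σ ∧ IsEndnode (T \ SX X) τ}

/-- `restrict f n = [f 0, …, f (n-1)]`. -/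
def restrict (f : ℕ → ℕ) (n : ℕ) : List ℕ :=
  List.ofFn fun i : Fin n => f i

/-- `f` is a path of the tree `T`. -/
def IsPath (T : Set (List ℕ)) (f : ℕ → ℕ) : Prop :=
  ∀ n, restrict f n ∈ T

/-- `f` is lexicographically smaller than `g`. -/
def LexLt (f g : ℕ → ℕ) : Prop :=
  ∃ n, restrict f n = restrict g n ∧ f n < g n

/-- `f = g` or `f <_l g`. -/
def LexLe (f g : ℕ → ℕ) : Prop := f = g ∨ LexLt f g

/-- The entries of `σ` at even positions, in order. -/
def evenPart (σ : List ℕ) : List ℕ :=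
  List.ofFn fun i : Fin ((σ.length + 1) / 2) => σ.getD (2 * i) 0

/-- The entries of `σ` at odd positions, in order. -/
def oddPart (σ : List ℕ) : List ℕ :=
  List.ofFn fun i : Fin (σ.length / 2) => σ.getD (2 * i + 1) 0

/-- `g_even(n) = g(2n)`. -/
def evenFn (g : ℕ → ℕ) : ℕ → ℕ := fun n => g (2 * n)

/-- `g_odd(n) = g(2n+1)`. -/
def oddFn (g : ℕ → ℕ) : ℕ → ℕ := fun n => g (2 * n + 1)

/-- `(f ⊔ x)(2n) = f(n)`, `(f ⊔ x)(2n+1) = x(n)`. -/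
def join (f x : ℕ → ℕ) : ℕ → ℕ := fun n => if n % 2 = 0 then f (n / 2) else x (n / 2)

/-- `S = {σ : σ_even ∈ T ∧ σ_odd is an initial segment of x}`. -/
def pairTree (T : Set (List ℕ)) (x : ℕ → ℕ) : Set (List ℕ) :=
  {σ | evenPart σ ∈ T ∧ oddPart σ = restrict x (σ.length / 2)}

lemma restrict_length (f : ℕ → ℕ) (n : ℕ) : (restrict f n).length = n := by
  simp [restrict]

lemma restrict_getD (f : ℕ → ℕ) {n k : ℕ} (h : k < n) : (restrict f n).getD k 0 = f k := by
  rw [restrict, List.getD_eq_getElem _ _ (by simpa using h)]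
  simp

lemma restrict_eq_iff {f g : ℕ → ℕ} {n : ℕ} :
    restrict f n = restrict g n ↔ ∀ k < n, f k = g k := by
  constructor
  · intro h k hk
    have h2 := congrArg (fun l => l.getD k 0) h
    change (restrict f n).getD k 0 = (restrict g n).getD k 0 at h2
    rwa [restrict_getD f hk, restrict_getD g hk] at h2
  · intro h
    unfold restrict
    congr 1
    funext i
    exact h i i.isLt

lemma getD_of_prefix {σ τ : List ℕ} (h : τ <+: σ) {k : ℕ} (hk : k < τ.length) :
    τ.getD k 0 = σ.getD k 0 := by
  rw [List.getD_eq_getElem _ _ hk, List.getD_eq_getElem _ _ (hk.trans_le h.length_le)]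
  exact List.IsPrefix.getElem h hk

lemma evenPart_restrict (f : ℕ → ℕ) (n : ℕ) :
    evenPart (restrict f n) = restrict (evenFn f) ((n + 1) / 2) := by
  apply List.ext_getElem
  · simp [evenPart, restrict_length, restrict]
  · intro i h1 h2
    simp only [evenPart, restrict, List.getElem_ofFn, evenFn]
    have hi : 2 * i < n := by
      simp only [evenPart, List.length_ofFn, restrict_length] at h1; omega
    rw [show (List.ofFn fun i : Fin n => f i) = restrict f n from rfl, restrict_getD f hi]

lemma oddPart_restrict (f : ℕ → ℕ) (n : ℕ) :
    oddPart (restrict f n) = restrict (oddFn f) (n / 2) := by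
  apply List.ext_getElem
  · simp [oddPart, restrict_length, restrict]
  · intro i h1 h2
    simp only [oddPart, restrict, List.getElem_ofFn, oddFn]
    have hi : 2 * i + 1 < n := by
      simp only [oddPart, List.length_ofFn, restrict_length] at h1; omega
    rw [show (List.ofFn fun i : Fin n => f i) = restrict f n from rfl, restrict_getD f hi]

lemma evenPart_prefix {σ τ : List ℕ} (h : τ <+: σ) : evenPart τ <+: evenPart σ := by
  rw [List.prefix_iff_eq_take]
  apply List.ext_getElem
  · simp only [evenPart, List.length_take, List.length_ofFn]
    have := h.length_le; omega
  · intro i h1 h2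
    simp only [evenPart, List.getElem_take, List.getElem_ofFn]
    have hi : i < (τ.length + 1) / 2 := by
      simpa [evenPart] using h1
    rcases Nat.lt_or_ge (2 * i) τ.length with hc | hc
    · exact getD_of_prefix h hc
    · omega

lemma oddPart_prefix {σ τ : List ℕ} (h : τ <+: σ) : oddPart τ <+: oddPart σ := by
  rw [List.prefix_iff_eq_take]
  apply List.ext_getElem
  · simp only [oddPart, List.length_take, List.length_ofFn]
    have := h.length_le; omega
  · intro i h1 h2
    simp only [oddPart, List.getElem_take, List.getElem_ofFn]
    have hi : i < τ.length / 2 := by simpa [oddPart] using h1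
    exact getD_of_prefix h (by omega)


lemma restrict_prefix (f : ℕ → ℕ) {m n : ℕ} (h : m ≤ n) : restrict f m <+: restrict f n := by
  rw [List.prefix_iff_eq_take]
  apply List.ext_getElem
  · simp [restrict_length]; omega
  · intro i h1 h2
    simp [restrict, List.getElem_take]

theorem stmt8 (T : Set (List ℕ)) (hT : IsTree T) (x : ℕ → ℕ) :
    IsTree (pairTree T x) ∧
    (∀ g : ℕ → ℕ, IsPath (pairTree T x) g → oddFn g = x) ∧
    Set.BijOn (fun h => join h x) {h | IsPath T h} {g | IsPath (pairTree T x) g} ∧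
    (∀ h : ℕ → ℕ, IsPath T h → evenFn (join h x) = h) ∧
    (∀ g : ℕ → ℕ, IsPath (pairTree T x) g → join (evenFn g) x = g) ∧
    (∀ g h : ℕ → ℕ, IsPath (pairTree T x) g → IsPath (pairTree T x) h →
      (LexLt g h ↔ LexLt (evenFn g) (evenFn h))) := by
  -- basic join identities
  have hje : ∀ h : ℕ → ℕ, evenFn (join h x) = h := by
    intro h; funext n
    show (if (2 * n) % 2 = 0 then h ((2 * n) / 2) else x ((2 * n) / 2)) = h n
    rw [if_pos (by omega)]; congr 1; omega
  have hjo : ∀ h : ℕ → ℕ, oddFn (join h x) = x := by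
    intro h; funext n
    show (if (2 * n + 1) % 2 = 0 then h _ else x ((2 * n + 1) / 2)) = x n
    rw [if_neg (by omega)]; congr 1; omega
  -- every path of S has odd part x
  have hodd : ∀ g : ℕ → ℕ, IsPath (pairTree T x) g → oddFn g = x := by
    intro g hg; funext n
    have h := (hg (2 * n + 2)).2
    rw [oddPart_restrict, restrict_length] at h
    exact restrict_eq_iff.mp h n (by omega)
  -- evenFn of a path of S is a path of T
  have hpathT : ∀ g : ℕ → ℕ, IsPath (pairTree T x) g → IsPath T (evenFn g) := by
    intro g hg n
    have h := (hg (2 * n)).1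
    rw [evenPart_restrict] at h
    have e : (2 * n + 1) / 2 = n := by omega
    rwa [e] at h
  -- join of a path of T with x is a path of S
  have hpathS : ∀ h : ℕ → ℕ, IsPath T h → IsPath (pairTree T x) (join h x) := by
    intro h hh n
    constructor
    · rw [evenPart_restrict, hje h]; exact hh _
    · rw [oddPart_restrict, restrict_length, hjo h]
  -- join (evenFn g) x = g for paths of S
  have hjoin_even : ∀ g : ℕ → ℕ, IsPath (pairTree T x) g → join (evenFn g) x = g := by
    intro g hg; funext n
    by_cases hn : n % 2 = 0
    · show (if n % 2 = 0 then evenFn g (n / 2) else x (n / 2)) = g n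
      rw [if_pos hn]; show g (2 * (n / 2)) = g n; congr 1; omega
    · show (if n % 2 = 0 then evenFn g (n / 2) else x (n / 2)) = g n
      rw [if_neg hn, ← hodd g hg]; show g (2 * (n / 2) + 1) = g n; congr 1; omega
  refine ⟨?_, hodd, ⟨?_, ?_, ?_⟩, fun h _ => hje h, hjoin_even, ?_⟩
  · -- IsTree
    intro σ hσ τ hτ
    refine ⟨hT _ hσ.1 _ (evenPart_prefix hτ), ?_⟩
    have h1 : oddPart τ <+: restrict x (σ.length / 2) := hσ.2 ▸ oddPart_prefix hτ
    have h2 : restrict x (τ.length / 2) <+: restrict x (σ.length / 2) :=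
      restrict_prefix x (by have := hτ.length_le; omega)
    have hl : (oddPart τ).length = (restrict x (τ.length / 2)).length := by
      simp [oddPart, restrict_length]
    rcases List.prefix_or_prefix_of_prefix h1 h2 with h | h
    · exact h.eq_of_length hl
    · exact (h.eq_of_length hl.symm).symm
  · -- MapsTo
    intro h hh; exact hpathS h hh
  · -- InjOn
    intro h1 _ h2 _ heq
    have := congrArg evenFn heq
    rwa [hje h1, hje h2] at this
  · -- SurjOn
    intro g hg
    exact ⟨evenFn g, hpathT g hg, hjoin_even g hg⟩
  · -- LexLt
    intro g h hg hh
    have hag : oddFn g = x := hodd g hg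
    have hah : oddFn h = x := hodd h hh
    constructor
    · rintro ⟨n, hr, hlt⟩
      have hev : n % 2 = 0 := by
        by_contra hc
        have e1 : g n = oddFn g (n / 2) := by show _ = g _; congr 1; omega
        have e2 : h n = oddFn h (n / 2) := by show _ = h _; congr 1; omega
        rw [e1, e2, hag, hah] at hlt
        omega
      refine ⟨n / 2, restrict_eq_iff.mpr fun k hk => ?_, ?_⟩
      · exact restrict_eq_iff.mp hr (2 * k) (by omega)
      · show g (2 * (n / 2)) < h (2 * (n / 2))
        have : 2 * (n / 2) = n := by omega
        rw [this]; exact hlt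
    · rintro ⟨m, hr, hlt⟩
      refine ⟨2 * m, restrict_eq_iff.mpr fun k hk => ?_, hlt⟩
      by_cases hk2 : k % 2 = 0
      · have e1 : g k = evenFn g (k / 2) := by show _ = g _; congr 1; omega
        have e2 : h k = evenFn h (k / 2) := by show _ = h _; congr 1; omega
        rw [e1, e2]
        exact restrict_eq_iff.mp hr (k / 2) (by omega)
      · have e1 : g k = oddFn g (k / 2) := by show _ = g _; congr 1; omega
        have e2 : h k = oddFn h (k / 2) := by show _ = h _; congr 1; omega
        rw [e1, e2, hag, hah]
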